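/- Suppose A = U Σ Vᵀ is a singular value decomposition with rank k and (A, b) satisfies the discrete Picard condition with parameter p > 1. Let (v̂_1,…,v̂_d) be the columns of an orthogonal d×d real matrix V̂, and let σ̂₁ ≥ … ≥ σ̂_d ≥ 0. Then Σ_{i=r+1}^d | Σ_{j=1}^k (v̂_iᵀ v_j) σ_j⁻¹ (u_jᵀ b) | ≤ (d − r)·( Σ_{j=1}^k ‖σ_j^{p−1} v_j − σ̂_j^{p−1} v̂_j‖₂ + σ̂_r^{p−1} − σ_r^{p−1} ) + (d − r)·σ_r^{p−1}. -/

import Mathlib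

open Matrix Finset

/-- The Euclidean (ℓ2) norm on `ℝ^d`. -/
noncomputable def euclidNorm {d : ℕ} (x : Fin d → ℝ) : ℝ :=
  Real.sqrt (∑ i, x i ^ 2)

lemma abs_dvec_le_enorm {d : ℕ} (x y : Fin d → ℝ) :
    |x ⬝ᵥ y| ≤ euclidNorm x * euclidNorm y := by
  rw [euclidNorm, euclidNorm, ← Real.sqrt_mul (by positivity), ← Real.sqrt_sq_eq_abs]
  apply Real.sqrt_le_sqrt
  exact Finset.sum_mul_sq_le_sq_mul_sq _ _ _

lemma card_filter_le_val (d r : ℕ) :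
    (Finset.univ.filter (fun i : Fin d => r ≤ (i:ℕ))).card = d - r := by
  rw [Finset.card_filter, Fin.sum_univ_eq_sum_range (fun i => if r ≤ i then 1 else 0),
    ← Finset.card_filter]
  have : (range d).filter (fun i => r ≤ i) = Finset.Ico r d := by
    ext x; simp only [Finset.mem_filter, Finset.mem_range, Finset.mem_Ico]; tauto
  rw [this, Nat.card_Ico]

/-- Under the discrete Picard condition with parameter `p > 1`,
with `(v̂_1,…,v̂_d)` the columns of an orthogonal matrix `V̂` and
`σ̂₁ ≥ … ≥ σ̂_d ≥ 0`,
`∑_{i=r+1}^d |∑_{j=1}^k (v̂_iᵀ v_j) σ_j⁻¹ (u_jᵀ b)|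
  ≤ (d − r)(∑_{j=1}^k ‖σ_j^{p−1} v_j − σ̂_j^{p−1} v̂_j‖₂ + σ̂_r^{p−1} − σ_r^{p−1})
    + (d − r) σ_r^{p−1}`. -/
theorem sum_abs_le_perturbation_bound
    (d r : ℕ) (hd : 1 ≤ d) (hr1 : 1 ≤ r) (hrd : r ≤ d)
    (U V : Matrix (Fin d) (Fin d) ℝ)
    (hU : Uᵀ * U = 1 ∧ U * Uᵀ = 1)
    (hV : Vᵀ * V = 1 ∧ V * Vᵀ = 1)
    (σ : Fin d → ℝ)
    (hσanti : ∀ i j : Fin d, i ≤ j → σ j ≤ σ i)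
    (hσnonneg : ∀ i : Fin d, 0 ≤ σ i)
    (A : Matrix (Fin d) (Fin d) ℝ)
    (hA : A = U * Matrix.diagonal σ * Vᵀ)
    (k : ℕ) (hkd : k ≤ d)
    (hrank : ∀ i : Fin d, (0 < σ i ↔ (i : ℕ) < k))
    (b : Fin d → ℝ) (p : ℝ) (hp : 1 < p)
    -- the discrete Picard condition: |u_iᵀ b| ≤ σ_i^p for i = 1,…,k and
    -- |u_iᵀ b| ≤ σ_k^p for i = k+1,…,d
    (hPicard₁ : ∀ i : Fin d, (i : ℕ) < k → |(fun l => U l i) ⬝ᵥ b| ≤ σ i ^ p)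
    (hPicard₂ : ∀ i j : Fin d, k ≤ (i : ℕ) → (j : ℕ) + 1 = k →
      |(fun l => U l i) ⬝ᵥ b| ≤ σ j ^ p)
    (Vhat : Matrix (Fin d) (Fin d) ℝ)
    (hVhat : Vhatᵀ * Vhat = 1 ∧ Vhat * Vhatᵀ = 1)
    (σhat : Fin d → ℝ)
    (hσhatanti : ∀ i j : Fin d, i ≤ j → σhat j ≤ σhat i)
    (hσhatnonneg : ∀ i : Fin d, 0 ≤ σhat i) :
    ∑ i ∈ Finset.univ.filter (fun i : Fin d => r ≤ (i : ℕ)),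
        |∑ j ∈ Finset.univ.filter (fun j : Fin d => (j : ℕ) < k),
          ((fun l => Vhat l i) ⬝ᵥ (fun l => V l j)) * (σ j)⁻¹ * ((fun l => U l j) ⬝ᵥ b)| ≤
      ((d : ℝ) - (r : ℝ)) *
          ((∑ j ∈ Finset.univ.filter (fun j : Fin d => (j : ℕ) < k),
              euclidNorm ((σ j ^ (p - 1)) • (fun l => V l j) -
                     (σhat j ^ (p - 1)) • (fun l => Vhat l j))) +
            σhat ⟨r - 1, by omega⟩ ^ (p - 1) - σ ⟨r - 1, by omega⟩ ^ (p - 1)) +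
        ((d : ℝ) - (r : ℝ)) * σ ⟨r - 1, by omega⟩ ^ (p - 1) := by
  set rr : Fin d := ⟨r - 1, by omega⟩ with hrr
  set S : ℝ := ∑ j ∈ Finset.univ.filter (fun j : Fin d => (j : ℕ) < k),
      euclidNorm ((σ j ^ (p - 1)) • (fun l => V l j) -
             (σhat j ^ (p - 1)) • (fun l => Vhat l j)) with hS
  -- orthonormality of Vhat columns
  have hVhcol : ∀ i j : Fin d,
      (fun l => Vhat l i) ⬝ᵥ (fun l => Vhat l j) = if i = j then 1 else 0 := by
    intro i j
    have := congrFun (congrFun hVhat.1 i) j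
    simpa [Matrix.mul_apply, Matrix.transpose_apply, Matrix.one_apply,
      dotProduct] using this
  have hVhnorm : ∀ i : Fin d, euclidNorm (fun l => Vhat l i) = 1 := by
    intro i
    have h := hVhcol i i
    simp only [if_pos rfl, dotProduct] at h
    have : ∑ l, (Vhat l i) ^ 2 = 1 := by
      simpa [sq] using h
    rw [euclidNorm, this, Real.sqrt_one]
  -- per-i bound
  have key : ∀ i ∈ Finset.univ.filter (fun i : Fin d => r ≤ (i : ℕ)),
      |∑ j ∈ Finset.univ.filter (fun j : Fin d => (j : ℕ) < k),
          ((fun l => Vhat l i) ⬝ᵥ (fun l => V l j)) * (σ j)⁻¹ * ((fun l => U l j) ⬝ᵥ b)|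
        ≤ S + σhat rr ^ (p - 1) := by
    intro i hi
    rw [Finset.mem_filter] at hi
    have hri : r ≤ (i : ℕ) := hi.2
    calc |∑ j ∈ Finset.univ.filter (fun j : Fin d => (j : ℕ) < k),
          ((fun l => Vhat l i) ⬝ᵥ (fun l => V l j)) * (σ j)⁻¹ * ((fun l => U l j) ⬝ᵥ b)|
        ≤ ∑ j ∈ Finset.univ.filter (fun j : Fin d => (j : ℕ) < k),
          |((fun l => Vhat l i) ⬝ᵥ (fun l => V l j)) * (σ j)⁻¹ * ((fun l => U l j) ⬝ᵥ b)| :=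
          Finset.abs_sum_le_sum_abs _ _
      _ ≤ ∑ j ∈ Finset.univ.filter (fun j : Fin d => (j : ℕ) < k),
          (euclidNorm ((σ j ^ (p - 1)) • (fun l => V l j) -
              (σhat j ^ (p - 1)) • (fun l => Vhat l j)) +
            (if i = j then σhat j ^ (p - 1) else 0)) := by
          apply Finset.sum_le_sum
          intro j hj
          rw [Finset.mem_filter] at hj
          have hjk : (j : ℕ) < k := hj.2
          have hσj : 0 < σ j := (hrank j).2 hjk
          have hp1 : (0:ℝ) ≤ p - 1 := by linarith
          -- step 1 : |c * σ⁻¹ * u| ≤ |c| * σ^(p-1)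
          have h1 : |((fun l => Vhat l i) ⬝ᵥ (fun l => V l j)) * (σ j)⁻¹ *
                ((fun l => U l j) ⬝ᵥ b)|
              ≤ |(fun l => Vhat l i) ⬝ᵥ (fun l => V l j)| * σ j ^ (p - 1) := by
            rw [abs_mul, abs_mul, abs_of_nonneg (inv_nonneg.2 hσj.le), mul_assoc]
            apply mul_le_mul_of_nonneg_left _ (abs_nonneg _)
            have hu := hPicard₁ j hjk
            have : (σ j)⁻¹ * |(fun l => U l j) ⬝ᵥ b| ≤ (σ j)⁻¹ * σ j ^ p :=
              mul_le_mul_of_nonneg_left hu (inv_nonneg.2 hσj.le)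
            refine this.trans_eq ?_
            rw [Real.rpow_sub hσj, Real.rpow_one, div_eq_inv_mul]
          refine h1.trans ?_
          have h2 : |(fun l => Vhat l i) ⬝ᵥ (fun l => V l j)| * σ j ^ (p - 1)
              = |(fun l => Vhat l i) ⬝ᵥ ((σ j ^ (p - 1)) • fun l => V l j)| := by
            rw [dotProduct_smul, smul_eq_mul, abs_mul,
              abs_of_nonneg (Real.rpow_nonneg (hσnonneg j) _), mul_comm]
          rw [h2]
          have h3 : (fun l => Vhat l i) ⬝ᵥ ((σ j ^ (p - 1)) • fun l => V l j)
              = (fun l => Vhat l i) ⬝ᵥ ((σ j ^ (p - 1)) • (fun l => V l j) -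
                  (σhat j ^ (p - 1)) • fun l => Vhat l j)
                + (σhat j ^ (p - 1)) * ((fun l => Vhat l i) ⬝ᵥ fun l => Vhat l j) := by
            simp only [dotProduct_sub, dotProduct_smul, smul_eq_mul]; ring
          rw [h3]
          refine (abs_add_le _ _).trans ?_
          gcongr ?_ + ?_
          · calc |(fun l => Vhat l i) ⬝ᵥ ((σ j ^ (p - 1)) • (fun l => V l j) -
                  (σhat j ^ (p - 1)) • fun l => Vhat l j)|
                ≤ euclidNorm (fun l => Vhat l i) * euclidNorm ((σ j ^ (p - 1)) • (fun l => V l j) -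
                  (σhat j ^ (p - 1)) • fun l => Vhat l j) := abs_dvec_le_enorm _ _
              _ = _ := by rw [hVhnorm i, one_mul]
          · rw [hVhcol i j]
            split_ifs with h
            · rw [mul_one, abs_of_nonneg (Real.rpow_nonneg (hσhatnonneg j) _)]
            · simp
      _ = S + ∑ j ∈ Finset.univ.filter (fun j : Fin d => (j : ℕ) < k),
            (if i = j then σhat j ^ (p - 1) else 0) := by
          rw [Finset.sum_add_distrib]
      _ ≤ S + σhat rr ^ (p - 1) := by
          gcongr S + ?_
          rw [Finset.sum_ite_eq]
          split_ifs with h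
          · have hle : rr ≤ i := by
              rw [hrr]; exact Fin.mk_le_of_le_val (by omega)
            exact Real.rpow_le_rpow (hσhatnonneg i) (hσhatanti rr i hle) (by linarith)
          · exact Real.rpow_nonneg (hσhatnonneg rr) _
  have hcard := card_filter_le_val d r
  have hsum := Finset.sum_le_card_nsmul _ _ _ key
  rw [hcard] at hsum
  have hcast : ((d - r : ℕ) : ℝ) = (d : ℝ) - (r : ℝ) := by
    rw [Nat.cast_sub hrd]
  calc _ ≤ (d - r : ℕ) • (S + σhat rr ^ (p - 1)) := hsum
    _ = ((d : ℝ) - (r : ℝ)) * (S + σhat rr ^ (p - 1)) := by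
        rw [nsmul_eq_mul, hcast]
    _ = ((d : ℝ) - (r : ℝ)) * (S + σhat rr ^ (p - 1) - σ rr ^ (p - 1)) +
        ((d : ℝ) - (r : ℝ)) * σ rr ^ (p - 1) := by ring
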